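/- arXiv:1512.08990 — 2 statements merged into one kernel-verified Lean document; each statement's English description precedes it below -/
import Mathlib

section
/- Let (X,Σ₁) and (Y,Σ₂) be measurable spaces, where Y carries a flat ω-CPO structure with bottom element ⊥ such that {⊥} ∈ Σ₂ (flat means x ≤ y iff x = ⊥ or x = y). If f₁ ≤ f₂ ≤ ... is an ω-chain of Σ₁/Σ₂-measurable functions X → Y under the pointwise order, then the pointwise supremum sup_i f_i is Σ₁/Σ₂-measurable. -/
/-- Let `(X, Σ₁)` and `(Y, Σ₂)` be measurable spaces, `Y` carrying a flat
ω-CPO structure with bottom element `bot` with `{bot}` measurable (in the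
flat order, `x ≤ y` iff `x = bot` or `x = y`). If `f₀ ≤ f₁ ≤ ⋯` is an
ω-chain of measurable functions `X → Y` under the pointwise flat order,
then its pointwise supremum `g` is measurable. Here `g` is characterized as
the supremum: `g x = bot` if all `f i x = bot`, and `g x = f i x` whenever
`f i x ≠ bot`. -/
theorem measurable_flat_sup
    {X Y : Type*} [MeasurableSpace X] [MeasurableSpace Y]
    (bot : Y) (hbot : MeasurableSet ({bot} : Set Y))
    (f : ℕ → X → Y) (hf : ∀ i, Measurable (f i))
    (hchain : ∀ i x, f i x = bot ∨ f (i + 1) x = f i x)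
    (g : X → Y)
    (hg_bot : ∀ x, (∀ i, f i x = bot) → g x = bot)
    (hg_sup : ∀ x i, f i x ≠ bot → g x = f i x) :
    Measurable g := by
  classical
  intro A hA
  have key : g ⁻¹' A =
      (⋃ i, f i ⁻¹' (A \ {bot})) ∪
        ((⋂ i, f i ⁻¹' {bot}) ∩ (if bot ∈ A then Set.univ else ∅)) := by
    ext x
    by_cases hall : ∀ i, f i x = bot
    · have hgx : g x = bot := hg_bot x hall
      simp only [Set.mem_preimage, Set.mem_union, Set.mem_iUnion, Set.mem_inter_iff,
        Set.mem_iInter, hgx, Set.mem_diff, Set.mem_singleton_iff]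
      constructor
      · intro h
        right
        refine ⟨hall, ?_⟩
        rw [if_pos h]
        trivial
      · rintro (⟨i, _, hne⟩ | ⟨_, h⟩)
        · exact absurd (hall i) hne
        · by_cases hb : bot ∈ A
          · exact hb
          · rw [if_neg hb] at h
            exact h.elim
    · push_neg at hall
      obtain ⟨i, hi⟩ := hall
      have hgx : g x = f i x := hg_sup x i hi
      simp only [Set.mem_preimage, Set.mem_union, Set.mem_iUnion, Set.mem_inter_iff,
        Set.mem_iInter, Set.mem_diff, Set.mem_singleton_iff]
      constructor
      · intro h
        refine Or.inl ⟨i, ?_, hi⟩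
        rwa [hgx] at h
      · rintro (⟨j, hj, hjne⟩ | ⟨hall', _⟩)
        · rwa [hg_sup x j hjne]
        · exact absurd (hall' i) hi
  rw [key]
  refine MeasurableSet.union (MeasurableSet.iUnion fun i => hf i (hA.diff hbot)) ?_
  refine MeasurableSet.inter (MeasurableSet.iInter fun i => hf i hbot) ?_
  split <;> simp
end

section
/- The big-step and small-step sampling-based semantics coincide: M ⇓ˢ_w G if and only if (M,1,s) ⇒ (G,w,[]). -/
namespace PLC

/-- Terms of the untyped probabilistic λ-calculus (de Bruijn indices).
`draw D cs` is a draw `D(c⃗)` from distribution identifier `D` with real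
parameters `cs`; `prim g cs` is a primitive function application `g(c⃗)`;
`ifte` is the conditional on a (boolean-coded) value; `exc` is `fail`. -/
inductive Tm : Type where
  | const : ℝ → Tm
  | var : ℕ → Tm
  | lam : Tm → Tm
  | app : Tm → Tm → Tm
  | draw : ℕ → List ℝ → Tm
  | prim : ℕ → List ℝ → Tm
  | ifte : Tm → Tm → Tm → Tm
  | score : Tm → Tm
  | exc : Tm

open Tm

/-- Capture-avoiding substitution of the closed value `V` for variable `k`. -/
def subst (V : Tm) : ℕ → Tm → Tm
  | k, var n => if n = k then V else if k < n then var (n - 1) else var n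
  | k, lam M => lam (subst V (k + 1) M)
  | k, app M N => app (subst V k M) (subst V k N)
  | k, ifte A M N => ifte (subst V k A) (subst V k M) (subst V k N)
  | k, score M => score (subst V k M)
  | _, const c => const c
  | _, draw D cs => draw D cs
  | _, prim g cs => prim g cs
  | _, exc => exc

/-- All free variables are `< k`. -/
def ClosedAt : ℕ → Tm → Prop
  | k, var n => n < k
  | k, lam M => ClosedAt (k + 1) M
  | k, app M N => ClosedAt k M ∧ ClosedAt k N
  | k, ifte A M N => ClosedAt k A ∧ ClosedAt k M ∧ ClosedAt k N
  | k, score M => ClosedAt k M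
  | _, const _ => True
  | _, draw _ _ => True
  | _, prim _ _ => True
  | _, exc => True

/-- Closed terms. -/
def Closed (M : Tm) : Prop := ClosedAt 0 M

/-- Closed values: real constants and λ-abstractions. -/
def IsVal (M : Tm) : Prop := (∃ c, M = const c) ∨ (∃ N, M = lam N)

/-- Generalized values: values together with `fail`. -/
def GVal (M : Tm) : Prop := IsVal M ∨ M = exc

/-- Evaluation contexts `E ::= [·] | E M | (λx.M) E`. -/
inductive Ctx : Type where
  | hole : Ctx
  | appL : Ctx → Tm → Ctx
  | appR : Tm → Ctx → Ctx

/-- Plug a term into the hole of an evaluation context. -/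
def plug : Ctx → Tm → Tm
  | .hole, M => M
  | .appL E N, M => app (plug E M) N
  | .appR B E, M => app (lam B) (plug E M)

/-- Composition of evaluation contexts. -/
def comp : Ctx → Ctx → Ctx
  | .hole, E' => E'
  | .appL E N, E' => .appL (comp E E') N
  | .appR B E, E' => .appR B (comp E E')

def tmTrue : Tm := const 1
def tmFalse : Tm := const 0

/-- Erroneous redexes: `c M`, an `if` whose guard is neither `true` nor
`false`, and a `score` whose argument is not a constant in `(0,1]`. -/
def ErrRedex (M : Tm) : Prop :=
  (∃ c N, M = app (const c) N) ∨
  (∃ A M₁ M₂, M = ifte A M₁ M₂ ∧ A ≠ tmTrue ∧ A ≠ tmFalse) ∨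
  (∃ V, M = score V ∧ ¬ ∃ c : ℝ, V = const c ∧ 0 < c ∧ c ≤ 1)

/-- Redexes: `(λx.M) V`, `D(c⃗)`, `g(c⃗)`, `score(c)`, `fail`,
conditionals, and erroneous redexes. -/
def Redex (M : Tm) : Prop :=
  (∃ B V, M = app (lam B) V ∧ IsVal V) ∨
  (∃ D cs, M = draw D cs) ∨
  (∃ g cs, M = prim g cs) ∨
  (∃ V, M = score V) ∨
  M = exc ∨
  (∃ A M₁ M₂, M = ifte A M₁ M₂) ∨
  ErrRedex M

/-- Deterministic reduction `M →det N`, parametrized by the interpretation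
`pr` of primitive function identifiers. -/
inductive Det (pr : ℕ → List ℝ → ℝ) : Tm → Tm → Prop
  | primStep (E : Ctx) (g : ℕ) (cs : List ℝ) :
      Det pr (plug E (prim g cs)) (plug E (const (pr g cs)))
  | beta (E : Ctx) (B V : Tm) : IsVal V →
      Det pr (plug E (app (lam B) V)) (plug E (subst V 0 B))
  | iteT (E : Ctx) (M N : Tm) :
      Det pr (plug E (ifte tmTrue M N)) (plug E M)
  | iteF (E : Ctx) (M N : Tm) :
      Det pr (plug E (ifte tmFalse M N)) (plug E N)
  | err (E : Ctx) (T : Tm) : ErrRedex T → Det pr (plug E T) (plug E exc)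
  | failCtx (E : Ctx) : E ≠ Ctx.hole → Det pr (plug E exc) exc

/-- Small-step sampling-based reduction on configurations `(M, w, s)`,
parametrized by the densities `pf` of distribution identifiers and the
interpretation `pr` of primitive functions. -/
inductive Step (pf : ℕ → List ℝ → ℝ → ℝ) (pr : ℕ → List ℝ → ℝ) :
    Tm × ℝ × List ℝ → Tm × ℝ × List ℝ → Prop
  | pure {M N : Tm} {w : ℝ} {s : List ℝ} :
      Det pr M N → Step pf pr (M, w, s) (N, w, s)
  | random {E : Ctx} {D : ℕ} {cs : List ℝ} {c w : ℝ} {s : List ℝ} :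
      0 < pf D cs c →
      Step pf pr (plug E (draw D cs), w, c :: s)
        (plug E (const c), w * pf D cs c, s)
  | randomFail {E : Ctx} {D : ℕ} {cs : List ℝ} {c w : ℝ} {s : List ℝ} :
      pf D cs c = 0 →
      Step pf pr (plug E (draw D cs), w, c :: s) (plug E exc, 0, s)
  | scoreStep {E : Ctx} {c w : ℝ} {s : List ℝ} : 0 < c → c ≤ 1 →
      Step pf pr (plug E (score (const c)), w, s)
        (plug E (const 1), c * w, s)

/-- Multi-step sampling-based reduction. -/
def Steps (pf : ℕ → List ℝ → ℝ → ℝ) (pr : ℕ → List ℝ → ℝ) :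
    Tm × ℝ × List ℝ → Tm × ℝ × List ℝ → Prop :=
  Relation.ReflTransGen (Step pf pr)

/-- Big-step sampling-based evaluation `M ⇓^s_w G`. -/
inductive Eval (pf : ℕ → List ℝ → ℝ → ℝ) (pr : ℕ → List ℝ → ℝ) :
    Tm → List ℝ → ℝ → Tm → Prop
  | val {G : Tm} : GVal G → Eval pf pr G [] 1 G
  | random {D : ℕ} {cs : List ℝ} {c : ℝ} : 0 < pf D cs c →
      Eval pf pr (draw D cs) [c] (pf D cs c) (const c)
  | randomFail {D : ℕ} {cs : List ℝ} {c : ℝ} : pf D cs c = 0 →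
      Eval pf pr (draw D cs) [c] 0 exc
  | primE {g : ℕ} {cs : List ℝ} :
      Eval pf pr (prim g cs) [] 1 (const (pr g cs))
  | appl {M N P V G : Tm} {s₁ s₂ s₃ : List ℝ} {w₁ w₂ w₃ : ℝ} :
      Eval pf pr M s₁ w₁ (lam P) → Eval pf pr N s₂ w₂ V → IsVal V →
      Eval pf pr (subst V 0 P) s₃ w₃ G →
      Eval pf pr (app M N) (s₁ ++ s₂ ++ s₃) (w₁ * w₂ * w₃) G
  | applRaise1 {M N : Tm} {s : List ℝ} {w : ℝ} :
      Eval pf pr M s w exc → Eval pf pr (app M N) s w exc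
  | applRaise2 {M N : Tm} {c : ℝ} {s : List ℝ} {w : ℝ} :
      Eval pf pr M s w (const c) → Eval pf pr (app M N) s w exc
  | applRaise3 {M N P : Tm} {s₁ s₂ : List ℝ} {w₁ w₂ : ℝ} :
      Eval pf pr M s₁ w₁ (lam P) → Eval pf pr N s₂ w₂ exc →
      Eval pf pr (app M N) (s₁ ++ s₂) (w₁ * w₂) exc
  | iteT {M N G : Tm} {s : List ℝ} {w : ℝ} :
      Eval pf pr M s w G → Eval pf pr (ifte tmTrue M N) s w G
  | iteF {M N G : Tm} {s : List ℝ} {w : ℝ} :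
      Eval pf pr N s w G → Eval pf pr (ifte tmFalse M N) s w G
  | scoreE {c : ℝ} : 0 < c → c ≤ 1 →
      Eval pf pr (score (const c)) [] c (const 1)
  | failE {T : Tm} : ErrRedex T → Eval pf pr T [] 1 exc

end PLC

/-!
Both directions work inside evaluation contexts. Forward, by induction on the big-step
derivation: if `M ⇓ˢ_w G`, then `E[M]` with weight `w₀` and trace `s ++ t` reduces to `E[G]`
with weight `w₀ * w` and trace `t`, except that `fail` discards `E`. Backward, every small step
`(M, w, s) → (N, w * v₀, s')` with `s = s₀ ++ s'` is inverted by big-step evaluation: each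
evaluation of `N` with trace `s₁` and weight `v` yields one of `M` with trace `s₀ ++ s₁` and weight
`v₀ * v`. This holds for redexes by the corresponding big-step rule and passes through the two
kinds of context frame; composing along the reduction sequence gives the converse.
-/

namespace PLC

open Tm

variable {pf : ℕ → List ℝ → ℝ → ℝ} {pr : ℕ → List ℝ → ℝ}

@[simp]
theorem plug_comp (E E' : Ctx) (M : Tm) : plug (comp E E') M = plug E (plug E' M) := by
  induction E <;> simp [comp, plug, *]

theorem steps_plug_exc (E : Ctx) (w : ℝ) (t : List ℝ) :
    Steps pf pr (plug E exc, w, t) (exc, w, t) := by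
  cases E with
  | hole => exact .refl
  | appL => exact .single (.pure (.failCtx _ Ctx.noConfusion))
  | appR => exact .single (.pure (.failCtx _ Ctx.noConfusion))

/-- Where a generalized value produced in the hole of `E` ends up: `fail` discards its context. -/
def plugRaise : Ctx → Tm → Tm
  | _, exc => exc
  | E, G => plug E G

@[simp]
theorem plugRaise_hole (G : Tm) : plugRaise .hole G = G := by
  cases G <;> rfl

@[simp]
theorem plugRaise_exc (E : Ctx) : plugRaise E exc = exc := rfl

@[simp]
theorem plugRaise_const (E : Ctx) (c : ℝ) : plugRaise E (const c) = plug E (const c) := rfl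

@[simp]
theorem plugRaise_lam (E : Ctx) (P : Tm) : plugRaise E (lam P) = plug E (lam P) := rfl

theorem plugRaise_of_isVal (E : Ctx) {V : Tm} (hV : IsVal V) : plugRaise E V = plug E V := by
  rcases hV with ⟨c, rfl⟩ | ⟨P, rfl⟩ <;> rfl

theorem steps_plug_plugRaise (E : Ctx) (G : Tm) (w : ℝ) (t : List ℝ) :
    Steps pf pr (plug E G, w, t) (plugRaise E G, w, t) := by
  cases G
  case exc => exact steps_plug_exc E w t
  all_goals exact .refl

theorem Eval.steps_plug {M : Tm} {s : List ℝ} {w : ℝ} {G : Tm} (h : Eval pf pr M s w G)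
    (E : Ctx) (w₀ : ℝ) (t : List ℝ) :
    Steps pf pr (plug E M, w₀, s ++ t) (plugRaise E G, w₀ * w, t) := by
  induction h generalizing E w₀ t with
  | val =>
    simpa using steps_plug_plugRaise E _ w₀ t
  | random hpos =>
    exact .single (.random hpos)
  | randomFail hzero =>
    rw [mul_zero]
    exact .head (.randomFail hzero) (steps_plug_exc E 0 t)
  | primE =>
    simpa using .single (.pure (Det.primStep E _ _))
  | @appl M N P V G s₁ s₂ s₃ w₁ w₂ w₃ _ _ hV _ ihM ihN ihP =>
    have hM := ihM (comp E (.appL .hole N)) w₀ (s₂ ++ (s₃ ++ t))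
    have hN := ihN (comp E (.appR P .hole)) (w₀ * w₁) (s₃ ++ t)
    have hβ : Steps pf pr (plug E (app (lam P) V), w₀ * w₁ * w₂, s₃ ++ t)
        (plug E (subst V 0 P), w₀ * w₁ * w₂, s₃ ++ t) := .single (.pure (.beta E P V hV))
    simp only [plug_comp, plug, plugRaise_lam, plugRaise_of_isVal _ hV] at hM hN
    simpa [Steps, mul_assoc] using hM.trans (hN.trans (hβ.trans (ihP E _ t)))
  | @applRaise1 M N _ _ _ ihM =>
    simpa [plug] using ihM (comp E (.appL .hole N)) w₀ t
  | @applRaise2 M N c s₁ w₁ _ ihM =>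
    have hM := ihM (comp E (.appL .hole N)) w₀ t
    simp only [plug_comp, plug, plugRaise_const] at hM
    exact hM.trans (.head (.pure (.err E _ (Or.inl ⟨c, N, rfl⟩))) (steps_plug_exc E _ t))
  | @applRaise3 M N P s₁ s₂ w₁ w₂ _ _ ihM ihN =>
    have hM := ihM (comp E (.appL .hole N)) w₀ (s₂ ++ t)
    have hN := ihN (comp E (.appR P .hole)) (w₀ * w₁) t
    simp only [plug_comp, plug, plugRaise_lam, plugRaise_exc] at hM hN
    simpa [Steps, mul_assoc] using hM.trans hN
  | @iteT M N _ _ _ _ ih =>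
    exact .head (.pure (.iteT E M N)) (ih E w₀ t)
  | @iteF M N _ _ _ _ ih =>
    exact .head (.pure (.iteF E M N)) (ih E w₀ t)
  | scoreE hpos hle =>
    rw [mul_comm]
    exact .single (.scoreStep hpos hle)
  | failE hT =>
    simpa using .head (.pure (.err E _ hT)) (steps_plug_exc E w₀ t)

theorem eval_gVal_iff {V : Tm} (hV : GVal V) {s : List ℝ} {v : ℝ} {G : Tm} :
    Eval pf pr V s v G ↔ s = [] ∧ v = 1 ∧ G = V := by
  refine ⟨fun h => ?_, by rintro ⟨rfl, rfl, rfl⟩; exact .val hV⟩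
  rcases hV with (⟨c, rfl⟩ | ⟨N, rfl⟩) | rfl <;> cases h
  all_goals first
    | exact ⟨rfl, rfl, rfl⟩
    | rename_i hT; rcases hT with ⟨_, _, hEq⟩ | ⟨_, _, _, hEq, -⟩ | ⟨_, hEq, -⟩ <;> cases hEq

theorem Eval.plug_of_exc {M : Tm} {s : List ℝ} {v : ℝ} (h : Eval pf pr M s v exc) (E : Ctx) :
    Eval pf pr (plug E M) s v exc := by
  induction E with
  | hole => exact h
  | appL E N ih => exact .applRaise1 ih
  | appR B E ih => simpa [PLC.plug] using Eval.applRaise3 (.val (Or.inl (Or.inr ⟨B, rfl⟩))) ih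

variable (pf pr) in
def Expands (M N : Tm) (s₀ : List ℝ) (v₀ : ℝ) : Prop :=
  ∀ ⦃s v G⦄, Eval pf pr N s v G → Eval pf pr M (s₀ ++ s) (v₀ * v) G

theorem Expands.of_eval {M V : Tm} {s₀ : List ℝ} {v₀ : ℝ} (hV : GVal V)
    (h : Eval pf pr M s₀ v₀ V) : Expands pf pr M V s₀ v₀ := by
  intro s v G hVG
  obtain ⟨rfl, rfl, rfl⟩ := (eval_gVal_iff hV).1 hVG
  simpa using h

theorem Expands.app_left {R R' : Tm} {s₀ : List ℝ} {v₀ : ℝ} (H : Expands pf pr R R' s₀ v₀)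
    (N : Tm) : Expands pf pr (app R N) (app R' N) s₀ v₀ := by
  intro s v G h
  cases h with
  | appl hM hN hV hP => simpa [mul_assoc] using Eval.appl (H hM) hN hV hP
  | applRaise1 hM => exact .applRaise1 (H hM)
  | applRaise2 hM => exact .applRaise2 (H hM)
  | applRaise3 hM hN => simpa [mul_assoc] using Eval.applRaise3 (H hM) hN
  | failE hT =>
    obtain ⟨c, _, hEq⟩ | ⟨_, _, _, hEq, -⟩ | ⟨_, hEq, -⟩ := hT
    · cases (Tm.app.inj hEq).1
      simpa using Eval.applRaise2 (H (.val (Or.inl (Or.inl ⟨c, rfl⟩))))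
    · cases hEq
    · cases hEq
  | val hG => rcases hG with (⟨_, hEq⟩ | ⟨_, hEq⟩) | hEq <;> cases hEq

theorem Expands.app_right {R R' : Tm} {s₀ : List ℝ} {v₀ : ℝ} (H : Expands pf pr R R' s₀ v₀)
    (B : Tm) : Expands pf pr (app (lam B) R) (app (lam B) R') s₀ v₀ := by
  have hB {s v G} : Eval pf pr (lam B) s v G → s = [] ∧ v = 1 ∧ G = lam B :=
    (eval_gVal_iff (Or.inl (Or.inr ⟨B, rfl⟩))).1
  intro s v G h
  cases h with
  | appl hB' hM hV hP =>
    obtain ⟨rfl, rfl, hEq⟩ := hB hB'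
    cases hEq
    simpa [mul_assoc] using Eval.appl hB' (H hM) hV hP
  | applRaise1 hB' | applRaise2 hB' => cases (hB hB').2.2
  | applRaise3 hB' hM =>
    obtain ⟨rfl, rfl, -⟩ := hB hB'
    simpa using Eval.applRaise3 hB' (H hM)
  | failE hT => obtain ⟨_, _, hEq⟩ | ⟨_, _, _, hEq, -⟩ | ⟨_, hEq, -⟩ := hT <;> cases hEq
  | val hG => rcases hG with (⟨_, hEq⟩ | ⟨_, hEq⟩) | hEq <;> cases hEq

theorem Expands.plug {R R' : Tm} {s₀ : List ℝ} {v₀ : ℝ} (H : Expands pf pr R R' s₀ v₀)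
    (E : Ctx) : Expands pf pr (PLC.plug E R) (PLC.plug E R') s₀ v₀ := by
  induction E with
  | hole => exact H
  | appL E N ih => exact ih.app_left N
  | appR B E ih => exact ih.app_right B

theorem Det.expands {M N : Tm} (h : Det pr M N) : Expands pf pr M N [] 1 := by
  cases h with
  | primStep E g cs => exact (Expands.of_eval (Or.inl (Or.inl ⟨_, rfl⟩)) .primE).plug E
  | beta E B V hV =>
    refine Expands.plug (fun s v G h => ?_) E
    simpa using Eval.appl (.val (Or.inl (Or.inr ⟨B, rfl⟩))) (.val (Or.inl hV)) hV h
  | iteT E M N => exact Expands.plug (fun s v G h => by simpa using Eval.iteT h) E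
  | iteF E M N => exact Expands.plug (fun s v G h => by simpa using Eval.iteF h) E
  | err E T hT => exact (Expands.of_eval (Or.inr rfl) (.failE hT)).plug E
  | failCtx E _ => exact Expands.of_eval (Or.inr rfl) ((Eval.val (Or.inr rfl)).plug_of_exc E)

theorem Step.expands {M N : Tm} {w w' : ℝ} {s s' : List ℝ}
    (h : Step pf pr (M, w, s) (N, w', s')) :
    ∃ s₀ v₀, s = s₀ ++ s' ∧ w' = w * v₀ ∧ Expands pf pr M N s₀ v₀ := by
  cases h with
  | pure hd => exact ⟨[], 1, rfl, (mul_one w).symm, hd.expands⟩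
  | random hpos =>
    exact ⟨_, _, rfl, rfl, (Expands.of_eval (Or.inl (Or.inl ⟨_, rfl⟩)) (.random hpos)).plug _⟩
  | randomFail hzero =>
    exact ⟨_, 0, rfl, (mul_zero w).symm, (Expands.of_eval (Or.inr rfl) (.randomFail hzero)).plug _⟩
  | scoreStep hpos hle =>
    exact ⟨[], _, rfl, mul_comm _ w,
      (Expands.of_eval (Or.inl (Or.inl ⟨_, rfl⟩)) (.scoreE hpos hle)).plug _⟩

theorem Steps.eval {M G : Tm} {w w' : ℝ} {s : List ℝ} (hG : GVal G)
    (h : Steps pf pr (M, w, s) (G, w', [])) : ∃ v, Eval pf pr M s v G ∧ w' = w * v := by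
  suffices ∀ a, Steps pf pr a (G, w', []) → ∃ v, Eval pf pr a.1 a.2.2 v G ∧ w' = a.2.1 * v from
    this _ h
  intro a ha
  induction ha using Relation.ReflTransGen.head_induction_on with
  | refl => exact ⟨1, .val hG, (mul_one w').symm⟩
  | head hstep _ ih =>
    obtain ⟨v, hv, rfl⟩ := ih
    obtain ⟨s₀, v₀, hs, hw, hexp⟩ := Step.expands hstep
    exact ⟨v₀ * v, hs ▸ hexp hv, by rw [hw, mul_assoc]⟩

end PLC

theorem PLC.bigstep_iff_smallstep_general (pf : ℕ → List ℝ → ℝ → ℝ)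
    (pr : ℕ → List ℝ → ℝ) {M G : PLC.Tm} {s : List ℝ} {w : ℝ}
    (hG : PLC.GVal G) :
    PLC.Eval pf pr M s w G ↔
      PLC.Steps pf pr (M, (1 : ℝ), s) (G, w, []) := by
  constructor
  · intro h
    simpa [plug] using h.steps_plug .hole 1 []
  · intro h
    obtain ⟨v, hv, rfl⟩ := h.eval hG
    rwa [one_mul]

/-- The big-step and small-step sampling-based semantics coincide:
`M ⇓ˢ_w G` if and only if `(M,1,s) ⇒ (G,w,[])`, for closed `M` and
generalized values `G`. -/
theorem PLC.bigstep_iff_smallstep (pf : ℕ → List ℝ → ℝ → ℝ)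
    (pr : ℕ → List ℝ → ℝ) {M G : PLC.Tm} {s : List ℝ} {w : ℝ}
    (hM : PLC.Closed M) (hG : PLC.GVal G) :
    PLC.Eval pf pr M s w G ↔
      PLC.Steps pf pr (M, (1 : ℝ), s) (G, w, []) :=
  PLC.bigstep_iff_smallstep_general pf pr hG
end
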